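/- Suppose X, Y, A, B, W are jointly distributed finitely-valued random variables with H(W|X,Y) = 0, I(X,A : Y | W) ≤ δ, H(W|X) ≤ δ, and H(W|A) ≤ δ for some δ ≥ 0. Then I(X:Y) ≤ I(X:Y|B) + I(A:B) + C·δ for some absolute constant C (one may take C = 4). -/

import Mathlib

/-!
`W` is an approximate common function of `X` and `A` given which `(X, A)` and `Y` are nearly
independent. Routing the information between `X` and `Y` through `W`,
`I(X:Y) ≤ I(X:Y|W) + I(W:Y) ≤ δ + I(W:Y|B) + I(W:B)`, and replacing `W` by `X` in the middle term
and by `A` in the last costs at most `H(W|X)` and `H(W|A)`. All steps are Shannon inequalities;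
the basic one, `I(X:Y|Z) ≥ 0`, is Gibbs' inequality for the law of `(X, Y, Z)` against the
coupling that makes `X` and `Y` conditionally independent given `Z`.
-/

open scoped BigOperators

namespace PaperIngleton

open Classical in
/-- Probability of an event under a pmf `p` on a finite sample space. -/
noncomputable def prob {Ω : Type*} [Fintype Ω] (p : Ω → ℝ) (E : Ω → Prop) : ℝ :=
  ∑ ω, if E ω then p ω else 0

/-- Shannon entropy of a finitely-valued random variable `X` under pmf `p`. -/
noncomputable def ent {Ω S : Type*} [Fintype Ω] [Fintype S] (p : Ω → ℝ) (X : Ω → S) : ℝ :=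
  -∑ s : S, prob p (fun ω => X ω = s) * Real.log (prob p (fun ω => X ω = s))

/-- Conditional entropy `H(X|Y)`. -/
noncomputable def condEnt {Ω S T : Type*} [Fintype Ω] [Fintype S] [Fintype T]
    (p : Ω → ℝ) (X : Ω → S) (Y : Ω → T) : ℝ :=
  ent p (fun ω => (X ω, Y ω)) - ent p Y

/-- Mutual information `I(X:Y)`. -/
noncomputable def mi {Ω S T : Type*} [Fintype Ω] [Fintype S] [Fintype T]
    (p : Ω → ℝ) (X : Ω → S) (Y : Ω → T) : ℝ :=
  ent p X + ent p Y - ent p (fun ω => (X ω, Y ω))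

/-- Conditional mutual information `I(X:Y|Z)`. -/
noncomputable def cmi {Ω S T U : Type*} [Fintype Ω] [Fintype S] [Fintype T] [Fintype U]
    (p : Ω → ℝ) (X : Ω → S) (Y : Ω → T) (Z : Ω → U) : ℝ :=
  ent p (fun ω => (X ω, Z ω)) + ent p (fun ω => (Y ω, Z ω))
    - ent p (fun ω => (X ω, Y ω, Z ω)) - ent p Z

end PaperIngleton

namespace PaperIngleton

open Finset Real

section Entropy

variable {Ω S T U V : Type*} [Fintype Ω] (p : Ω → ℝ)

lemma prob_nonneg (hp : ∀ ω, 0 ≤ p ω) (E : Ω → Prop) : 0 ≤ prob p E :=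
  sum_nonneg fun ω _ => by split_ifs <;> simp [hp ω]

lemma prob_mono (hp : ∀ ω, 0 ≤ p ω) {E E' : Ω → Prop} (h : ∀ ω, E ω → E' ω) :
    prob p E ≤ prob p E' :=
  sum_le_sum fun ω _ => by
    by_cases hE : E ω
    · simp [hE, h ω hE]
    · split_ifs <;> simp [hp ω]

lemma le_prob_self (hp : ∀ ω, 0 ≤ p ω) (X : Ω → S) (ω : Ω) :
    p ω ≤ prob p (fun ω' => X ω' = X ω) := by
  classical
  calc p ω = if X ω = X ω then p ω else 0 := (if_pos rfl).symm
    _ ≤ prob p (fun ω' => X ω' = X ω) :=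
      single_le_sum (f := fun ω' => if X ω' = X ω then p ω' else 0)
        (fun ω' _ => by split_ifs <;> simp [hp ω']) (mem_univ ω)

lemma sum_prob_mul [Fintype S] (X : Ω → S) (g : S → ℝ) :
    ∑ s, prob p (fun ω => X ω = s) * g s = ∑ ω, p ω * g (X ω) := by
  classical
  simp only [prob, sum_mul, ite_mul, zero_mul]
  rw [sum_comm]
  exact sum_congr rfl fun ω _ => by simp

lemma sum_prob [Fintype S] (X : Ω → S) : ∑ s, prob p (fun ω => X ω = s) = ∑ ω, p ω := by
  simpa using sum_prob_mul p X fun _ => 1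

lemma sum_prob_pair [Fintype S] (X : Ω → S) (Z : Ω → U) (z : U) :
    ∑ x, prob p (fun ω => (X ω, Z ω) = (x, z)) = prob p (fun ω => Z ω = z) := by
  classical
  simp only [prob]
  rw [sum_comm]
  refine sum_congr rfl fun ω _ => ?_
  simp only [Prod.ext_iff, ite_and]
  simp

lemma ent_eq_sum [Fintype S] (X : Ω → S) :
    ent p X = -∑ ω, p ω * log (prob p (fun ω' => X ω' = X ω)) := by
  rw [ent, sum_prob_mul p X fun s => log (prob p (fun ω => X ω = s))]

lemma ent_congr [Fintype S] [Fintype T] {X : Ω → S} {Y : Ω → T}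
    (h : ∀ ω ω', X ω' = X ω ↔ Y ω' = Y ω) : ent p X = ent p Y := by
  simp only [ent_eq_sum, h]

lemma ent_pair_comm [Fintype S] [Fintype T] (X : Ω → S) (Y : Ω → T) :
    ent p (fun ω => (X ω, Y ω)) = ent p (fun ω => (Y ω, X ω)) :=
  ent_congr p fun _ _ => by simp only [Prod.mk.injEq]; tauto

lemma ent_le_neg_sum_mul_log [Fintype S] (hp : ∀ ω, 0 ≤ p ω) (X : Ω → S) (q : S → ℝ)
    (hq : ∀ s, 0 ≤ q s) (hq_sum : ∑ s, q s ≤ ∑ ω, p ω) (hq_pos : ∀ ω, 0 < p ω → 0 < q (X ω)) :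
    ent p X ≤ -∑ ω, p ω * log (q (X ω)) := by
  set P : S → ℝ := fun s => prob p (fun ω => X ω = s)
  have hterm : ∀ ω, p ω * (log (q (X ω)) - log (P (X ω)))
      ≤ p ω * (q (X ω) / P (X ω)) - p ω := by
    intro ω
    rcases (hp ω).eq_or_lt with h0 | h0
    · simp [← h0]
    have hP : 0 < P (X ω) := h0.trans_le (le_prob_self p hp X ω)
    have hlog := log_le_sub_one_of_pos (div_pos (hq_pos ω h0) hP)
    rw [log_div (hq_pos ω h0).ne' hP.ne'] at hlog
    have := mul_le_mul_of_nonneg_left hlog h0.le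
    linarith
  have hratio : ∑ ω, p ω * (q (X ω) / P (X ω)) ≤ ∑ ω, p ω := by
    rw [← sum_prob_mul p X fun s => q s / P s]
    refine (sum_le_sum fun s _ => ?_).trans hq_sum
    rcases eq_or_ne (P s) 0 with h | h
    · simp [P, h, hq s]
    · exact (mul_div_cancel₀ _ h).le
  have hsum := sum_le_sum fun ω (_ : ω ∈ (univ : Finset Ω)) => hterm ω
  simp only [mul_sub, sum_sub_distrib] at hsum
  rw [ent_eq_sum]
  linarith

/-- The law of `(X', Y', Z)` in which `X'`, `Y'` are conditionally independent given `Z` and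
`(X', Z)`, `(Y', Z)` are distributed as `(X, Z)`, `(Y, Z)`. `I(X:Y|Z)` is the divergence of the law
of `(X, Y, Z)` from it. -/
noncomputable def condIndepMass (X : Ω → S) (Y : Ω → T) (Z : Ω → U) (v : S × T × U) : ℝ :=
  prob p (fun ω => (X ω, Z ω) = (v.1, v.2.2)) * prob p (fun ω => (Y ω, Z ω) = (v.2.1, v.2.2))
    / prob p (fun ω => Z ω = v.2.2)

variable (X : Ω → S) (Y : Ω → T) (Z : Ω → U)

lemma condIndepMass_nonneg (hp : ∀ ω, 0 ≤ p ω) (v : S × T × U) :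
    0 ≤ condIndepMass p X Y Z v := by
  have := prob_nonneg p hp
  exact div_nonneg (mul_nonneg (this _) (this _)) (this _)

lemma condIndepMass_pos (hp : ∀ ω, 0 ≤ p ω) {ω : Ω} (hω : 0 < p ω) :
    0 < condIndepMass p X Y Z (X ω, Y ω, Z ω) := by
  have hXZ : p ω ≤ prob p (fun ω' => (X ω', Z ω') = (X ω, Z ω)) :=
    le_prob_self p hp (fun ω => (X ω, Z ω)) ω
  have hYZ : p ω ≤ prob p (fun ω' => (Y ω', Z ω') = (Y ω, Z ω)) :=
    le_prob_self p hp (fun ω => (Y ω, Z ω)) ω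
  have hZ := le_prob_self p hp Z ω
  unfold condIndepMass
  exact div_pos (mul_pos (hω.trans_le hXZ) (hω.trans_le hYZ)) (hω.trans_le hZ)

variable [Fintype S] [Fintype T] [Fintype U]

lemma sum_condIndepMass : ∑ v, condIndepMass p X Y Z v = ∑ ω, p ω := by
  set A : S → U → ℝ := fun x z => prob p (fun ω => (X ω, Z ω) = (x, z))
  set B : T → U → ℝ := fun y z => prob p (fun ω => (Y ω, Z ω) = (y, z))
  set D : U → ℝ := fun z => prob p (fun ω => Z ω = z)
  calc ∑ v, condIndepMass p X Y Z v = ∑ x, ∑ y, ∑ z, A x z * B y z / D z := by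
        simp only [condIndepMass, Fintype.sum_prod_type]; rfl
    _ = ∑ x, ∑ z, ∑ y, A x z * B y z / D z := sum_congr rfl fun _ _ => sum_comm
    _ = ∑ z, ∑ x, ∑ y, A x z * B y z / D z := sum_comm
    _ = ∑ z, D z * D z / D z := by
        refine sum_congr rfl fun z _ => ?_
        simp only [← sum_div, ← mul_sum, ← sum_mul]
        rw [sum_prob_pair p Y Z z, sum_prob_pair p X Z z]
    _ = ∑ ω, p ω := by simp only [mul_self_div_self]; exact sum_prob p Z

lemma neg_sum_mul_log_condIndepMass (hp : ∀ ω, 0 ≤ p ω) :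
    -∑ ω, p ω * log (condIndepMass p X Y Z (X ω, Y ω, Z ω))
      = ent p (fun ω => (X ω, Z ω)) + ent p (fun ω => (Y ω, Z ω)) - ent p Z := by
  simp only [ent_eq_sum, ← sum_sub_distrib, ← sum_add_distrib, ← sum_neg_distrib]
  refine sum_congr rfl fun ω _ => ?_
  rcases (hp ω).eq_or_lt with h0 | h0
  · simp [← h0]
  have hXZ : p ω ≤ prob p (fun ω' => (X ω', Z ω') = (X ω, Z ω)) :=
    le_prob_self p hp (fun ω => (X ω, Z ω)) ω
  have hYZ : p ω ≤ prob p (fun ω' => (Y ω', Z ω') = (Y ω, Z ω)) :=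
    le_prob_self p hp (fun ω => (Y ω, Z ω)) ω
  have hZ := le_prob_self p hp Z ω
  simp only [condIndepMass]
  rw [log_div (mul_pos (h0.trans_le hXZ) (h0.trans_le hYZ)).ne' (h0.trans_le hZ).ne',
    log_mul (h0.trans_le hXZ).ne' (h0.trans_le hYZ).ne']
  ring

theorem cmi_nonneg (hp : ∀ ω, 0 ≤ p ω) : 0 ≤ cmi p X Y Z := by
  have h := ent_le_neg_sum_mul_log p hp (fun ω => (X ω, Y ω, Z ω)) (condIndepMass p X Y Z)
    (condIndepMass_nonneg p X Y Z hp) (sum_condIndepMass p X Y Z).le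
    (fun _ hω => condIndepMass_pos p X Y Z hp hω)
  rw [neg_sum_mul_log_condIndepMass p X Y Z hp] at h
  unfold cmi
  linarith

theorem condEnt_nonneg (hp : ∀ ω, 0 ≤ p ω) : 0 ≤ condEnt p X Y := by
  rw [condEnt, ent_eq_sum, ent_eq_sum, neg_sub_neg, ← sum_sub_distrib]
  refine sum_nonneg fun ω _ => ?_
  rcases (hp ω).eq_or_lt with h0 | h0
  · simp [← h0]
  rw [← mul_sub]
  refine mul_nonneg h0.le (sub_nonneg.2 (log_le_log ?_ ?_))
  · exact h0.trans_le (le_prob_self p hp (fun ω => (X ω, Y ω)) ω)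
  · exact prob_mono p hp fun ω' h => congrArg Prod.snd h

theorem mi_comm : mi p X Y = mi p Y X := by
  rw [mi, mi, ent_pair_comm p X Y]
  ring

theorem cmi_comm : cmi p X Y Z = cmi p Y X Z := by
  have e : ent p (fun ω => (X ω, Y ω, Z ω)) = ent p (fun ω => (Y ω, X ω, Z ω)) :=
    ent_congr p fun _ _ => by simp only [Prod.mk.injEq]; tauto
  rw [cmi, cmi, e]
  ring

variable [Fintype V]

theorem mi_le_cmi_add_mi (hp : ∀ ω, 0 ≤ p ω) : mi p X Y ≤ cmi p X Y Z + mi p X Z := by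
  have h := cmi_nonneg p X Z Y hp
  have e : ent p (fun ω => (X ω, Z ω, Y ω)) = ent p (fun ω => (X ω, Y ω, Z ω)) :=
    ent_congr p fun _ _ => by simp only [Prod.mk.injEq]; tauto
  unfold cmi at h ⊢
  unfold mi
  linarith [ent_pair_comm p Z Y]

theorem cmi_le_cmi_pair_left (hp : ∀ ω, 0 ≤ p ω) (A : Ω → V) :
    cmi p X Y Z ≤ cmi p (fun ω => (X ω, A ω)) Y Z := by
  have h := cmi_nonneg p A Y (fun ω => (X ω, Z ω)) hp
  have e₁ : ent p (fun ω => (A ω, X ω, Z ω)) = ent p (fun ω => ((X ω, A ω), Z ω)) :=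
    ent_congr p fun _ _ => by simp only [Prod.mk.injEq]; tauto
  have e₂ : ent p (fun ω => (Y ω, X ω, Z ω)) = ent p (fun ω => (X ω, Y ω, Z ω)) :=
    ent_congr p fun _ _ => by simp only [Prod.mk.injEq]; tauto
  have e₃ : ent p (fun ω => (A ω, Y ω, X ω, Z ω)) = ent p (fun ω => ((X ω, A ω), Y ω, Z ω)) :=
    ent_congr p fun _ _ => by simp only [Prod.mk.injEq]; tauto
  unfold cmi at h ⊢
  linarith

theorem mi_le_mi_add_condEnt (hp : ∀ ω, 0 ≤ p ω) : mi p X Z ≤ mi p Y Z + condEnt p X Y := by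
  have h₁ := cmi_nonneg p Y Z X hp
  have h₂ := condEnt_nonneg p X (fun ω => (Y ω, Z ω)) hp
  have e : ent p (fun ω => (Y ω, Z ω, X ω)) = ent p (fun ω => (X ω, Y ω, Z ω)) :=
    ent_congr p fun _ _ => by simp only [Prod.mk.injEq]; tauto
  unfold cmi at h₁
  unfold condEnt at h₂ ⊢
  unfold mi
  linarith [ent_pair_comm p Y X, ent_pair_comm p Z X]

theorem cmi_le_cmi_add_condEnt (hp : ∀ ω, 0 ≤ p ω) (B : Ω → V) :
    cmi p X Z B ≤ cmi p Y Z B + condEnt p X Y := by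
  have h₁ := cmi_le_cmi_pair_left p X Z B hp Y
  have h₂ := condEnt_nonneg p X (fun ω => (Y ω, Z ω, B ω)) hp
  have h₃ := cmi_nonneg p X B Y hp
  have e₁ : ent p (fun ω => (X ω, Y ω, Z ω, B ω)) = ent p (fun ω => ((X ω, Y ω), Z ω, B ω)) :=
    ent_congr p fun _ _ => by simp only [Prod.mk.injEq]; tauto
  have e₂ : ent p (fun ω => (X ω, B ω, Y ω)) = ent p (fun ω => ((X ω, Y ω), B ω)) :=
    ent_congr p fun _ _ => by simp only [Prod.mk.injEq]; tauto
  unfold cmi at h₁ h₃ ⊢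
  unfold condEnt at h₂ ⊢
  linarith [ent_pair_comm p B Y]

end Entropy

theorem stmt6_general {Ω S T U V R : Type} [Fintype Ω] [Fintype S] [Fintype T] [Fintype U]
    [Fintype V] [Fintype R]
    (p : Ω → ℝ) (hp : ∀ ω, 0 ≤ p ω)
    (X : Ω → S) (Y : Ω → T) (A : Ω → U) (B : Ω → V) (W : Ω → R)
    (δ : ℝ) (hδ : 0 ≤ δ)
    (hXAY : cmi p (fun ω => (X ω, A ω)) Y W ≤ δ)
    (hWX : condEnt p W X ≤ δ)
    (hWA : condEnt p W A ≤ δ) :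
    mi p X Y ≤ cmi p X Y B + mi p A B + 4 * δ := by
  have hXY : mi p X Y ≤ cmi p X Y W + mi p W Y := by
    rw [mi_comm p X Y, cmi_comm p X Y W, mi_comm p W Y]
    exact mi_le_cmi_add_mi p Y X W hp
  have hXYW : cmi p X Y W ≤ δ := (cmi_le_cmi_pair_left p X Y W hp A).trans hXAY
  have hWY : mi p W Y ≤ cmi p W Y B + mi p W B := mi_le_cmi_add_mi p W Y B hp
  have hWYB : cmi p W Y B ≤ cmi p X Y B + condEnt p W X := cmi_le_cmi_add_condEnt p W X Y hp B
  have hWB : mi p W B ≤ mi p A B + condEnt p W A := mi_le_mi_add_condEnt p W A B hp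
  linarith

theorem stmt6 {Ω S T U V R : Type} [Fintype Ω] [Fintype S] [Fintype T] [Fintype U]
    [Fintype V] [Fintype R]
    (p : Ω → ℝ) (hp : ∀ ω, 0 ≤ p ω) (hp1 : ∑ ω, p ω = 1)
    (X : Ω → S) (Y : Ω → T) (A : Ω → U) (B : Ω → V) (W : Ω → R)
    (δ : ℝ) (hδ : 0 ≤ δ)
    (hWXY : condEnt p W (fun ω => (X ω, Y ω)) = 0)
    (hXAY : cmi p (fun ω => (X ω, A ω)) Y W ≤ δ)
    (hWX : condEnt p W X ≤ δ)
    (hWA : condEnt p W A ≤ δ) :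
    mi p X Y ≤ cmi p X Y B + mi p A B + 4 * δ :=
  stmt6_general p hp X Y A B W δ hδ hXAY hWX hWA

end PaperIngleton
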